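/- arXiv:1709.00703 — 4 statements merged into one kernel-verified Lean document; each statement's English description precedes it below -/
import Mathlib

section
/- Let A : ℝ → ℝ be Lipschitz with constant L, let p ∈ (1,∞), and let b ∈ L^q_loc(ℝ) for some q ∈ (1,∞). If the commutator [b, C_Γ] is bounded on L^p(ℝ), then b ∈ BMO(ℝ), and there is a constant C₂ (depending only on p and L) such that ‖b‖_{BMO} ≤ C₂‖[b,C_Γ]‖_{L^p(ℝ)→L^p(ℝ)}. -/
open MeasureTheory Filter Set
open scoped ENNReal

/-- The Cauchy kernel `K(x,y) = 1/(y - x + i(A(y) - A(x)))` associated to `A`. -/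
noncomputable def cauchyKernel (A : ℝ → ℝ) (x y : ℝ) : ℂ :=
  ((y : ℂ) - (x : ℂ) + Complex.I * ((A y : ℂ) - (A x : ℂ)))⁻¹

/-- `cauchyPV A f x v` : the principal value `C_Γ f (x)` exists and equals `v`. -/
def cauchyPV (A : ℝ → ℝ) (f : ℝ → ℂ) (x : ℝ) (v : ℂ) : Prop :=
  Filter.Tendsto (fun δ : ℝ => ∫ y in {y : ℝ | δ < |y - x|}, cauchyKernel A x y * f y)
    (nhdsWithin 0 (Set.Ioi 0)) (nhds v)

/-- `g` agrees a.e. with the commutator `[b, C_Γ] f = b • C_Γ f - C_Γ (b f)`. -/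
def IsCommutatorFn (A b : ℝ → ℝ) (f g : ℝ → ℂ) : Prop :=
  ∀ᵐ x : ℝ, ∃ u w : ℂ,
    cauchyPV A f x u ∧ cauchyPV A (fun y => (b y : ℂ) * f y) x w ∧
    g x = (b x : ℂ) * u - w

/-- Average of `b` over the interval `I(x,r) = (x - r, x + r)`. -/
noncomputable def intervalAvg (b : ℝ → ℝ) (x r : ℝ) : ℝ :=
  (2 * r)⁻¹ * ∫ y in Set.Ioo (x - r) (x + r), b y

/-- Mean oscillation `M(b, I(x,r))`. -/
noncomputable def meanOsc (b : ℝ → ℝ) (x r : ℝ) : ℝ :=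
  (2 * r)⁻¹ * ∫ y in Set.Ioo (x - r) (x + r), |b y - intervalAvg b x r|

def IsBMOWith (b : ℝ → ℝ) (N : ℝ) : Prop :=
  MeasureTheory.LocallyIntegrable b volume ∧ ∀ x r : ℝ, 0 < r → meanOsc b x r ≤ N

/-- `b ∈ BMO(ℝ)`. -/
def IsBMO (b : ℝ → ℝ) : Prop := ∃ N : ℝ, IsBMOWith b N

/-- `‖b‖_BMO`, the supremum of the mean oscillations of `b` over all bounded intervals. -/
noncomputable def bmoNorm (b : ℝ → ℝ) : ℝ := sInf {N : ℝ | IsBMOWith b N}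

/-!
For `x ∈ I = (x₀ - r, x₀ + r)` and `y ∈ J = (x₀ + 3r, x₀ + 5r)` the Lipschitz bound on `A` gives
`Re K(x, y) ≥ 1 / (6 (1 + L²) r)` and `|K(x, y)| ≤ 1 / (2r)`. Let `m` be a median of `b` on `J`
and let `E ⊆ J` be the half of `J` on which `b ≥ m` (resp. `b ≤ m`), so `|E| ≥ r`. For `x ∈ I`
the commutator applied to `1_E` is the absolutely convergent integral
`∫_E (b(x) - b(y)) K(x, y) dy`, and when `b(x) ≤ m` (resp. `b(x) ≥ m`) the factor `b(x) - b(y)`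
has constant sign on `E`, so the real part of the kernel yields
`|b(x) - m| ≤ 6 (1 + L²) |[b, C_Γ] 1_E (x)|`. Hölder's inequality on `I` and the `L^p` bound
`‖[b, C_Γ] 1_E‖_p ≤ C |E|^{1/p}` give `∫_I |b - m| ≤ 24 (1 + L²) C r`, and the mean oscillation
over `I` is at most twice the mean deviation of `b` from any constant.
-/

open Topology

theorem exists_median (ν : Measure ℝ) [IsFiniteMeasure ν] :
    ∃ m, ν univ ≤ 2 * ν (Iic m) ∧ ν univ ≤ 2 * ν (Ici m) := by
  rcases eq_or_ne (ν univ) 0 with hU | hU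
  · exact ⟨0, by simp [hU], by simp [hU]⟩
  have h2 : (2 : ℝ≥0∞) ≠ ∞ := ENNReal.ofNat_ne_top
  set S := {t : ℝ | ν univ ≤ 2 * ν (Iic t)}
  have hne : S.Nonempty := by
    have hlt : ν univ < 2 * ν univ := by
      rw [two_mul]
      exact ENNReal.lt_add_right (measure_ne_top ν _) hU
    obtain ⟨t, ht⟩ := ((ENNReal.Tendsto.const_mul (tendsto_measure_Iic_atTop ν)
      (.inr h2)).eventually_const_lt hlt).exists
    exact ⟨t, ht.le⟩
  have hbdd : BddBelow S := by
    have hempty : ⋂ t : ℝ, Iic (id t) = ∅ :=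
      iInter_Iic_eq_empty_iff.2 (by rw [range_id]; exact not_bddBelow_univ)
    have h0 : Tendsto (fun t => 2 * ν (Iic t)) atBot (𝓝 (2 * 0)) := by
      refine ENNReal.Tendsto.const_mul ?_ (.inr h2)
      rw [← measure_empty (μ := ν), ← hempty]
      exact tendsto_measure_iInter_atBot (fun _ => measurableSet_Iic.nullMeasurableSet)
        (fun _ _ => Iic_subset_Iic.2) ⟨0, measure_ne_top ν _⟩
    rw [mul_zero] at h0
    obtain ⟨a, ha⟩ := eventually_atBot.1 (h0.eventually_lt_const (pos_iff_ne_zero.2 hU))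
    exact ⟨a, fun t ht => le_of_not_gt fun hta => (ha t hta.le).not_ge ht⟩
  set m := sInf S
  have hmem : ∀ t, m < t → t ∈ S := fun t ht => by
    obtain ⟨s, hs, hst⟩ := exists_lt_of_csInf_lt hne ht
    exact le_trans (show ν univ ≤ 2 * ν (Iic s) from hs)
      (by gcongr 2 * ?_; exact measure_mono (Iic_subset_Iic.2 hst.le))
  have hnmem : ∀ t < m, 2 * ν (Iic t) < ν univ := fun t ht =>
    lt_of_not_ge fun h => (csInf_le hbdd h).not_gt ht
  refine ⟨m, ?_, ?_⟩
  · have hlim := tendsto_measure_biInter_gt (μ := ν) (s := Iic) (a := m)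
      (fun _ _ => measurableSet_Iic.nullMeasurableSet) (fun _ _ _ => Iic_subset_Iic.2)
      ⟨m + 1, by linarith, measure_ne_top ν _⟩
    have hIic : ⋂ r > m, Iic r = Iic m := by
      ext t
      simpa using forall_gt_imp_ge_iff_le_of_dense
    rw [hIic] at hlim
    exact ge_of_tendsto (ENNReal.Tendsto.const_mul hlim (.inr h2))
      (eventually_nhdsWithin_of_forall hmem)
  · have hIio : ⋃ n : ℕ, Iic (m - 1 / (n + 1)) = Iio m := by
      ext t
      simp only [mem_iUnion, mem_Iic, mem_Iio]
      refine ⟨fun ⟨n, hn⟩ => hn.trans_lt (sub_lt_self m (by positivity)), fun ht => ?_⟩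
      obtain ⟨n, hn⟩ := exists_nat_one_div_lt (sub_pos.2 ht)
      exact ⟨n, by linarith⟩
    have hlim : Tendsto (fun n : ℕ => 2 * ν (Iic (m - 1 / (n + 1)))) atTop
        (𝓝 (2 * ν (Iio m))) := by
      rw [← hIio]
      refine ENNReal.Tendsto.const_mul (tendsto_measure_iUnion_atTop fun i j hij => ?_) (.inr h2)
      refine Iic_subset_Iic.2 (sub_le_sub_left (one_div_le_one_div_of_le (by positivity) ?_) m)
      exact_mod_cast Nat.succ_le_succ hij
    have hIio_le : 2 * ν (Iio m) ≤ ν univ :=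
      le_of_tendsto' hlim fun n => (hnmem _ (sub_lt_self m (by positivity))).le
    have hsplit : ν (Iio m) + ν (Ici m) = ν univ := by
      rw [← compl_Iio, measure_add_measure_compl measurableSet_Iio]
    refine ENNReal.le_of_add_le_add_left (measure_ne_top ν univ) ?_
    calc ν univ + ν univ = 2 * ν (Iio m) + 2 * ν (Ici m) := by rw [← mul_add, hsplit, two_mul]
      _ ≤ ν univ + 2 * ν (Ici m) := by gcongr

theorem setIntegral_norm_le_of_ae_le_mul {α F G : Type*} [MeasurableSpace α] {μ : Measure α}
    [NormedAddCommGroup F] [NormedAddCommGroup G] {s : Set α} {p : ℝ≥0∞} (hp : 1 ≤ p)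
    {f : α → F} {g : α → G} (hf : AEStronglyMeasurable f (μ.restrict s)) {c K a : ℝ}
    (hc : 0 ≤ c) (hK : 0 ≤ K) (ha : 0 ≤ a) (hfg : ∀ᵐ x ∂μ.restrict s, ‖f x‖ ≤ c * ‖g x‖)
    (hs : μ s ≤ ENNReal.ofReal a)
    (hg : eLpNorm g p μ ≤ ENNReal.ofReal K * ENNReal.ofReal a ^ (1 / p.toReal)) :
    ∫ x in s, ‖f x‖ ∂μ ≤ c * K * a := by
  have hp' : 1 / p.toReal ≤ 1 := by
    rcases eq_or_ne p ∞ with rfl | hp_top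
    · simp
    · exact div_le_one_of_le₀ (by simpa using ENNReal.toReal_mono hp_top hp) (by positivity)
  rw [integral_norm_eq_lintegral_enorm hf]
  refine ENNReal.toReal_le_of_le_ofReal (by positivity) ?_
  calc ∫⁻ x in s, ‖f x‖ₑ ∂μ = eLpNorm f 1 (μ.restrict s) := eLpNorm_one_eq_lintegral_enorm.symm
    _ ≤ eLpNorm f p (μ.restrict s) * μ.restrict s univ ^ (1 / (1 : ℝ≥0∞).toReal - 1 / p.toReal) :=
      eLpNorm_le_eLpNorm_mul_rpow_measure_univ hp hf
    _ ≤ ENNReal.ofReal c * eLpNorm g p μ * ENNReal.ofReal a ^ (1 - 1 / p.toReal) := by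
      rw [Measure.restrict_apply_univ, ENNReal.toReal_one, div_one]
      gcongr
      exact (eLpNorm_le_mul_eLpNorm_of_ae_le_mul hfg p).trans
        (by gcongr; exact Measure.restrict_le_self)
    _ ≤ ENNReal.ofReal c * (ENNReal.ofReal K * ENNReal.ofReal a ^ (1 / p.toReal))
        * ENNReal.ofReal a ^ (1 - 1 / p.toReal) := by gcongr
    _ = ENNReal.ofReal (c * K * a) := by
      rw [mul_assoc, mul_assoc, ← ENNReal.rpow_add_of_nonneg _ _ (by positivity) (by linarith),
        add_sub_cancel, ENNReal.rpow_one, ENNReal.ofReal_mul (by positivity),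
        ENNReal.ofReal_mul hc, mul_assoc]

section MeanOscillation

variable {b : ℝ → ℝ}

theorem meanOsc_nonneg (b : ℝ → ℝ) (x : ℝ) {r : ℝ} (hr : 0 ≤ r) : 0 ≤ meanOsc b x r :=
  mul_nonneg (by positivity) (integral_nonneg fun _ => abs_nonneg _)

theorem IsBMOWith.bmoNorm_le {N : ℝ} (h : IsBMOWith b N) : bmoNorm b ≤ N :=
  csInf_le ⟨0, fun _ hN => (meanOsc_nonneg b 0 zero_le_one).trans (hN.2 0 1 one_pos)⟩ h

theorem meanOsc_congr_ae {b' : ℝ → ℝ} (hb : b =ᵐ[volume] b') (x r : ℝ) :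
    meanOsc b x r = meanOsc b' x r := by
  have havg : intervalAvg b x r = intervalAvg b' x r := by
    rw [intervalAvg, intervalAvg, integral_congr_ae (ae_restrict_of_ae hb)]
  rw [meanOsc, meanOsc, havg]
  congr 1
  refine integral_congr_ae (ae_restrict_of_ae ?_)
  filter_upwards [hb] with y hy
  rw [hy]

theorem meanOsc_le_inv_mul_setIntegral_abs_sub {x r : ℝ} (hr : 0 < r)
    (hb : IntegrableOn b (Ioo (x - r) (x + r))) (m : ℝ) :
    meanOsc b x r ≤ r⁻¹ * ∫ y in Ioo (x - r) (x + r), |b y - m| := by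
  set I := Ioo (x - r) (x + r)
  set avg := intervalAvg b x r
  have hIfin : volume I ≠ ∞ := measure_Ioo_lt_top.ne
  have hI : volume.real I = 2 * r := by
    rw [Real.volume_real_Ioo_of_le (by linarith)]
    ring
  have hbm : IntegrableOn (fun y => |b y - m|) I := (hb.sub (integrableOn_const hIfin)).abs
  have havg : |avg - m| * (2 * r) ≤ ∫ y in I, |b y - m| := by
    have : avg - m = (2 * r)⁻¹ * ∫ y in I, (b y - m) := by
      rw [integral_sub hb (integrableOn_const hIfin), setIntegral_const, hI]
      simp only [avg, intervalAvg]
      field_simp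
      ring
    rw [this, abs_mul, abs_of_pos (by positivity : (0 : ℝ) < (2 * r)⁻¹), mul_right_comm,
      inv_mul_cancel₀ (by positivity), one_mul]
    exact abs_integral_le_integral_abs
  have hosc : ∫ y in I, |b y - avg| ≤ 2 * ∫ y in I, |b y - m| := by
    calc ∫ y in I, |b y - avg| ≤ ∫ y in I, (|b y - m| + |avg - m|) :=
          integral_mono (hb.sub (integrableOn_const hIfin)).abs
            (hbm.add (integrableOn_const hIfin))
            fun y => (abs_sub_le _ m _).trans_eq (by rw [abs_sub_comm m])
      _ = (∫ y in I, |b y - m|) + |avg - m| * (2 * r) := by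
          rw [integral_add hbm (integrableOn_const hIfin), setIntegral_const, hI, smul_eq_mul,
            mul_comm]
      _ ≤ 2 * ∫ y in I, |b y - m| := by linarith
  rw [meanOsc]
  calc (2 * r)⁻¹ * ∫ y in I, |b y - avg| ≤ (2 * r)⁻¹ * (2 * ∫ y in I, |b y - m|) := by gcongr
    _ = r⁻¹ * ∫ y in I, |b y - m| := by field_simp

end MeanOscillation

theorem two_mul_le_abs_sub_of_mem_Ioo {x₀ r x y : ℝ} (hx : x ∈ Ioo (x₀ - r) (x₀ + r))
    (hy : y ∈ Ioo (x₀ + 3 * r) (x₀ + 5 * r)) : 2 * r ≤ |y - x| := by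
  obtain ⟨_, _⟩ := hx
  obtain ⟨_, _⟩ := hy
  rw [abs_of_pos (by linarith)]
  linarith

section CauchyKernel

variable {A : ℝ → ℝ} {x y : ℝ}

theorem norm_cauchyKernel_le : ‖cauchyKernel A x y‖ ≤ |y - x|⁻¹ := by
  rcases eq_or_ne y x with rfl | hxy
  · simp [cauchyKernel]
  rw [cauchyKernel, norm_inv]
  refine inv_anti₀ (abs_pos.2 (sub_ne_zero.2 hxy)) ?_
  simpa using Complex.abs_re_le_norm
    ((y : ℂ) - (x : ℂ) + Complex.I * ((A y : ℂ) - (A x : ℂ)))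

theorem inv_le_re_cauchyKernel {L : ℝ} (hA : ∀ x₁ x₂ : ℝ, |A x₁ - A x₂| ≤ L * |x₁ - x₂|)
    (hxy : x < y) : ((1 + L ^ 2) * (y - x))⁻¹ ≤ (cauchyKernel A x y).re := by
  have hre : (cauchyKernel A x y).re = (y - x) / ((y - x) ^ 2 + (A y - A x) ^ 2) := by
    simp [cauchyKernel, Complex.inv_re, Complex.normSq_apply, sq]
  have hLip : |A y - A x| ≤ L * (y - x) := by simpa [abs_of_pos (sub_pos.2 hxy)] using hA y x
  have hsq : (A y - A x) ^ 2 ≤ L ^ 2 * (y - x) ^ 2 := by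
    rw [← mul_pow, ← sq_abs]
    exact pow_le_pow_left₀ (abs_nonneg _) hLip 2
  have hd : 0 < y - x := sub_pos.2 hxy
  rw [hre, inv_eq_one_div, div_le_div_iff₀ (by positivity) (by positivity)]
  nlinarith

theorem measurable_cauchyKernel (hA : Measurable A) (x : ℝ) : Measurable (cauchyKernel A x) := by
  unfold cauchyKernel
  fun_prop

theorem integrableOn_mul_cauchyKernel (hA : Measurable A) {E : Set ℝ} (hE : MeasurableSet E)
    {ε : ℝ} (hε : 0 < ε) (hsep : ∀ y ∈ E, ε ≤ |y - x|) {h : ℝ → ℂ} (hh : IntegrableOn h E) :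
    IntegrableOn (fun y => h y * cauchyKernel A x y) E := by
  refine (hh.norm.mul_const ε⁻¹).mono'
    (hh.aestronglyMeasurable.mul (measurable_cauchyKernel hA x).aestronglyMeasurable) ?_
  filter_upwards [ae_restrict_mem hE] with y hy
  rw [norm_mul]
  gcongr
  exact norm_cauchyKernel_le.trans (inv_anti₀ hε (hsep y hy))

end CauchyKernel

theorem cauchyPV.eq_setIntegral {A : ℝ → ℝ} {f : ℝ → ℂ} {x : ℝ} {u : ℂ} (h : cauchyPV A f x u)
    {E : Set ℝ} {ε : ℝ} (hε : 0 < ε) (hsep : ∀ y ∈ E, ε ≤ |y - x|)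
    (hf : ∀ y ∉ E, f y = 0) : u = ∫ y in E, cauchyKernel A x y * f y := by
  refine tendsto_nhds_unique h (tendsto_const_nhds.congr' ?_)
  filter_upwards [Ioo_mem_nhdsGT hε] with δ hδ
  refine (setIntegral_eq_of_subset_of_forall_sdiff_eq_zero
    (measurableSet_lt measurable_const (by fun_prop) : MeasurableSet {y : ℝ | δ < |y - x|})
    (fun y hy => hδ.2.trans_le (hsep y hy)) fun y hy => by rw [hf y hy.2, mul_zero]).symm

section Commutator

variable {A b : ℝ → ℝ}

theorem IsCommutatorFn.ae_eq_setIntegral_of_indicator {g : ℝ → ℂ} {E I : Set ℝ}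
    (hg : IsCommutatorFn A b (E.indicator fun _ => 1) g) (hA : Measurable A)
    (hE : MeasurableSet E) (hEfin : volume E ≠ ∞) (hb : IntegrableOn b E) {ε : ℝ} (hε : 0 < ε)
    (hsep : ∀ x ∈ I, ∀ y ∈ E, ε ≤ |y - x|) :
    ∀ᵐ x, x ∈ I → g x = ∫ y in E, ((b x - b y : ℝ) : ℂ) * cauchyKernel A x y := by
  filter_upwards [hg] with x ⟨u, w, hu, hw, hgx⟩ hx
  have hind : ∀ y ∉ E, E.indicator (fun _ => (1 : ℂ)) y = 0 := fun y hy =>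
    indicator_of_notMem hy _
  rw [hgx, hu.eq_setIntegral hε (hsep x hx) hind,
    hw.eq_setIntegral hε (hsep x hx) fun y hy => by rw [hind y hy, mul_zero],
    ← integral_const_mul, ← integral_sub]
  · refine setIntegral_congr_fun hE fun y hy => ?_
    simp only [indicator_of_mem hy]
    push_cast
    ring
  · refine (integrableOn_mul_cauchyKernel hA hE hε (hsep x hx)
      (integrableOn_const hEfin (C := (b x : ℂ)))).congr_fun (fun y hy => ?_) hE
    simp only [indicator_of_mem hy]
    ring
  · refine (integrableOn_mul_cauchyKernel hA hE hε (hsep x hx) hb.ofReal).congr_fun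
      (fun y hy => ?_) hE
    rw [indicator_of_mem hy, mul_one]
    exact mul_comm _ _

theorem IsCommutatorFn.congr_ae {b' : ℝ → ℝ} {f g : ℝ → ℂ} (h : IsCommutatorFn A b f g)
    (hb : b =ᵐ[volume] b') : IsCommutatorFn A b' f g := by
  filter_upwards [h, hb] with x ⟨u, w, hu, hw, hgx⟩ hx
  refine ⟨u, w, hu, hw.congr fun δ => integral_congr_ae ?_, by rw [hgx, hx]⟩
  filter_upwards [ae_restrict_of_ae hb] with y hy
  rw [hy]

def CommutatorBoundedBy (A b : ℝ → ℝ) (p : ℝ≥0∞) (C : ℝ) : Prop :=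
  ∀ f : ℝ → ℂ, MemLp f p volume →
    ∃ g : ℝ → ℂ, IsCommutatorFn A b f g ∧
      eLpNorm g p volume ≤ ENNReal.ofReal C * eLpNorm f p volume

variable {p : ℝ≥0∞} {C : ℝ}

theorem CommutatorBoundedBy.congr_ae {b' : ℝ → ℝ} (h : CommutatorBoundedBy A b p C)
    (hb : b =ᵐ[volume] b') : CommutatorBoundedBy A b' p C :=
  fun f hf => (h f hf).imp fun _ hg => ⟨hg.1.congr_ae hb, hg.2⟩

theorem CommutatorBoundedBy.exists_ae_eq_setIntegral (hbound : CommutatorBoundedBy A b p C)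
    (hA : Measurable A) {E I : Set ℝ} (hE : MeasurableSet E) (hEfin : volume E ≠ ∞)
    (hb : IntegrableOn b E) {ε : ℝ} (hε : 0 < ε) (hsep : ∀ x ∈ I, ∀ y ∈ E, ε ≤ |y - x|) :
    ∃ g : ℝ → ℂ, (∀ᵐ x, x ∈ I → g x = ∫ y in E, ((b x - b y : ℝ) : ℂ) * cauchyKernel A x y) ∧
      eLpNorm g p volume ≤ ENNReal.ofReal C * volume E ^ (1 / p.toReal) := by
  obtain ⟨g, hg, hgp⟩ := hbound _ (memLp_indicator_const p hE (1 : ℂ) (.inr hEfin))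
  refine ⟨g, hg.ae_eq_setIntegral_of_indicator hA hE hEfin hb hε hsep, hgp.trans ?_⟩
  gcongr
  simpa using eLpNorm_indicator_const_le (μ := volume) (s := E) (1 : ℂ) p

variable {L : ℝ}

theorem le_mul_re_setIntegral_mul_cauchyKernel
    (hA : ∀ x₁ x₂ : ℝ, |A x₁ - A x₂| ≤ L * |x₁ - x₂|) {x₀ r x : ℝ} (hr : 0 < r)
    (hx : x ∈ Ioo (x₀ - r) (x₀ + r)) {E : Set ℝ} (hE : MeasurableSet E)
    (hEJ : E ⊆ Ioo (x₀ + 3 * r) (x₀ + 5 * r)) (hEr : ENNReal.ofReal r ≤ volume E)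
    {h : ℝ → ℝ} (hh : IntegrableOn h E) {d : ℝ} (hd : 0 ≤ d) (hdh : ∀ y ∈ E, d ≤ h y) :
    d ≤ 6 * (1 + L ^ 2) * (∫ y in E, (h y : ℂ) * cauchyKernel A x y).re := by
  have hEfin : volume E ≠ ∞ := ((measure_mono hEJ).trans_lt measure_Ioo_lt_top).ne
  have hint : IntegrableOn (fun y => (h y : ℂ) * cauchyKernel A x y) E :=
    integrableOn_mul_cauchyKernel (LipschitzWith.of_dist_le' hA).continuous.measurable hE
      (by positivity : (0 : ℝ) < 2 * r)
      (fun y hy => two_mul_le_abs_sub_of_mem_Ioo hx (hEJ hy)) hh.ofReal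
  have hκ : ∀ y ∈ E, (6 * (1 + L ^ 2) * r)⁻¹ ≤ (cauchyKernel A x y).re := fun y hy => by
    obtain ⟨_, _⟩ := hEJ hy
    obtain ⟨_, _⟩ := hx
    refine (inv_anti₀ (mul_pos (by positivity) (by linarith)) ?_).trans
      (inv_le_re_cauchyKernel hA (by linarith))
    nlinarith [sq_nonneg L]
  have hlow : d * (6 * (1 + L ^ 2) * r)⁻¹ * volume.real E
      ≤ ∫ y in E, RCLike.re ((h y : ℂ) * cauchyKernel A x y) := by
    refine setIntegral_ge_of_const_le_real hE hEfin (fun y hy => ?_) hint.re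
    simp only [RCLike.re_to_complex, Complex.re_ofReal_mul]
    exact mul_le_mul (hdh y hy) (hκ y hy) (by positivity) (hd.trans (hdh y hy))
  have hrE : r ≤ volume.real E := (ENNReal.ofReal_le_iff_le_toReal hEfin).1 hEr
  rw [← RCLike.re_to_complex, ← integral_re hint]
  calc d = 6 * (1 + L ^ 2) * (d * (6 * (1 + L ^ 2) * r)⁻¹ * r) := by field_simp
    _ ≤ 6 * (1 + L ^ 2) * (d * (6 * (1 + L ^ 2) * r)⁻¹ * volume.real E) := by gcongr
    _ ≤ _ := by gcongr

/-- By `hside`, the test set `E` lies on the other side of `m` from the points of `s`; the sign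
`σ = ±1` records which side. -/
theorem setIntegral_abs_sub_le_of_commutatorBoundedBy
    (hA : ∀ x₁ x₂ : ℝ, |A x₁ - A x₂| ≤ L * |x₁ - x₂|) (hp : 1 ≤ p) (hb : Measurable b)
    (hbloc : LocallyIntegrable b) (hC : 0 ≤ C) (hbound : CommutatorBoundedBy A b p C)
    {x₀ r : ℝ} (hr : 0 < r) {s E : Set ℝ} (hs : MeasurableSet s)
    (hsI : s ⊆ Ioo (x₀ - r) (x₀ + r)) (hE : MeasurableSet E)
    (hEJ : E ⊆ Ioo (x₀ + 3 * r) (x₀ + 5 * r)) (hEr : ENNReal.ofReal r ≤ volume E) {m σ : ℝ}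
    (hσ : |σ| = 1) (hside : ∀ x ∈ s, ∀ y ∈ E, |b x - m| ≤ σ * (b y - b x)) :
    ∫ x in s, |b x - m| ≤ 12 * (1 + L ^ 2) * C * r := by
  have hIvol : volume (Ioo (x₀ - r) (x₀ + r)) = ENNReal.ofReal (2 * r) := by
    rw [Real.volume_Ioo]
    ring_nf
  have hJvol : volume (Ioo (x₀ + 3 * r) (x₀ + 5 * r)) = ENNReal.ofReal (2 * r) := by
    rw [Real.volume_Ioo]
    ring_nf
  have hEfin : volume E ≠ ∞ := ((measure_mono hEJ).trans_lt measure_Ioo_lt_top).ne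
  have hbE : IntegrableOn b E :=
    (hbloc.integrableOn_isCompact isCompact_Icc).mono_set (hEJ.trans Ioo_subset_Icc_self)
  obtain ⟨g, hg, hgp⟩ := hbound.exists_ae_eq_setIntegral
    (LipschitzWith.of_dist_le' hA).continuous.measurable hE hEfin hbE (by positivity)
    fun x hx y hy => two_mul_le_abs_sub_of_mem_Ioo (hsI hx) (hEJ hy)
  have hpt : ∀ᵐ x ∂volume.restrict s, ‖b x - m‖ ≤ 6 * (1 + L ^ 2) * ‖g x‖ := by
    filter_upwards [ae_restrict_mem hs, ae_restrict_of_ae hg] with x hxs hgx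
    have hσg : ∫ y in E, ((σ * (b y - b x) : ℝ) : ℂ) * cauchyKernel A x y = -σ * g x := by
      rw [hgx hxs, ← integral_const_mul]
      refine integral_congr_ae (Eventually.of_forall fun y => ?_)
      push_cast
      ring
    have hle := le_mul_re_setIntegral_mul_cauchyKernel hA hr (hsI hxs) hE hEJ hEr
      (h := fun y => σ * (b y - b x)) ((hbE.sub (integrableOn_const hEfin)).const_mul σ)
      (abs_nonneg _) (hside x hxs)
    rw [hσg] at hle
    exact hle.trans (by gcongr; exact (Complex.re_le_norm _).trans_eq (by simp [hσ]))
  have := setIntegral_norm_le_of_ae_le_mul (c := 6 * (1 + L ^ 2)) (K := C) (a := 2 * r) hp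
    (hb.sub_const m).aestronglyMeasurable (by positivity) hC (by positivity) hpt
    ((measure_mono hsI).trans_eq hIvol)
    (hgp.trans (by gcongr; exact (measure_mono hEJ).trans_eq hJvol))
  simp only [Real.norm_eq_abs] at this
  linarith

theorem meanOsc_le_of_commutatorBoundedBy
    (hA : ∀ x₁ x₂ : ℝ, |A x₁ - A x₂| ≤ L * |x₁ - x₂|) (hp : 1 ≤ p) (hb : Measurable b)
    (hbloc : LocallyIntegrable b) (hC : 0 ≤ C) (hbound : CommutatorBoundedBy A b p C)
    (x₀ : ℝ) {r : ℝ} (hr : 0 < r) : meanOsc b x₀ r ≤ 24 * (1 + L ^ 2) * C := by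
  set I := Ioo (x₀ - r) (x₀ + r)
  set J := Ioo (x₀ + 3 * r) (x₀ + 5 * r)
  obtain ⟨m, hm_le, hm_ge⟩ := exists_median ((volume.restrict J).map b)
  have hhalf : ∀ t : Set ℝ, MeasurableSet t →
      (volume.restrict J).map b univ ≤ 2 * (volume.restrict J).map b t →
      ENNReal.ofReal r ≤ volume (b ⁻¹' t ∩ J) := fun t ht h => by
    rw [Measure.map_apply hb MeasurableSet.univ, Measure.map_apply hb ht, preimage_univ,
      Measure.restrict_apply_univ, Measure.restrict_apply (hb ht), Real.volume_Ioo,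
      show x₀ + 5 * r - (x₀ + 3 * r) = 2 * r by ring, ENNReal.ofReal_mul zero_le_two,
      ENNReal.ofReal_ofNat] at h
    exact (ENNReal.mul_le_mul_iff_right two_ne_zero ENNReal.ofNat_ne_top).1 h
  have hbI : IntegrableOn b I :=
    (hbloc.integrableOn_isCompact isCompact_Icc).mono_set Ioo_subset_Icc_self
  have hlow := setIntegral_abs_sub_le_of_commutatorBoundedBy hA hp hb hbloc hC hbound hr
    (measurableSet_Ioo.inter (hb measurableSet_Iic)) inter_subset_left
    ((hb measurableSet_Ici).inter measurableSet_Ioo) inter_subset_right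
    (hhalf _ measurableSet_Ici hm_ge) (abs_one (α := ℝ)) fun x hx y hy => by
      have : b x ≤ m := hx.2
      have : m ≤ b y := hy.1
      rw [abs_of_nonpos (by linarith)]
      linarith
  have hhigh := setIntegral_abs_sub_le_of_commutatorBoundedBy hA hp hb hbloc hC hbound hr
    (measurableSet_Ioo.diff (hb measurableSet_Iic)) sdiff_subset
    ((hb measurableSet_Iic).inter measurableSet_Ioo) inter_subset_right
    (hhalf _ measurableSet_Iic hm_le) (by simp : |(-1 : ℝ)| = 1) fun x hx y hy => by
      have : m < b x := lt_of_not_ge hx.2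
      have : b y ≤ m := hy.1
      rw [abs_of_pos (by linarith)]
      linarith
  have hsplit := integral_inter_add_sdiff (hb (measurableSet_Iic (a := m)))
    (hbI.sub (integrableOn_const measure_Ioo_lt_top.ne (C := m))).abs
  simp only [Pi.sub_apply] at hsplit
  calc meanOsc b x₀ r ≤ r⁻¹ * ∫ y in I, |b y - m| :=
        meanOsc_le_inv_mul_setIntegral_abs_sub hr hbI m
    _ ≤ r⁻¹ * (24 * (1 + L ^ 2) * C * r) := by gcongr; linarith
    _ = 24 * (1 + L ^ 2) * C := by field_simp

end Commutator

theorem commutator_bounded_implies_bmo_general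
    (A : ℝ → ℝ) (L : ℝ)
    (hA : ∀ x₁ x₂ : ℝ, |A x₁ - A x₂| ≤ L * |x₁ - x₂|)
    (p : ℝ≥0∞) (hp1 : 1 < p) :
    ∃ C₂ : ℝ, 0 < C₂ ∧
      ∀ q : ℝ≥0∞, 1 < q → q ≠ ⊤ →
      ∀ b : ℝ → ℝ,
        (∀ K : Set ℝ, IsCompact K → MemLp b q (volume.restrict K)) →
        ∀ C : ℝ, 0 ≤ C →
          (∀ f : ℝ → ℂ, MemLp f p volume →
            ∃ g : ℝ → ℂ, IsCommutatorFn A b f g ∧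
              eLpNorm g p volume ≤ ENNReal.ofReal C * eLpNorm f p volume) →
          IsBMO b ∧ bmoNorm b ≤ C₂ * C := by
  refine ⟨24 * (1 + L ^ 2), by positivity, fun q hq _ b hbq C hC hbound => ?_⟩
  have hbloc : LocallyIntegrable b := locallyIntegrable_iff.2 fun K hK =>
    haveI := isFiniteMeasure_restrict.2 (hK.measure_lt_top (μ := volume)).ne
    (hbq K hK).integrable hq.le
  have hb := hbloc.aestronglyMeasurable
  have hosc : IsBMOWith b (24 * (1 + L ^ 2) * C) := ⟨hbloc, fun x r hr => by
    rw [meanOsc_congr_ae hb.ae_eq_mk]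
    exact meanOsc_le_of_commutatorBoundedBy hA hp1.le hb.stronglyMeasurable_mk.measurable
      (hbloc.congr hb.ae_eq_mk) hC (CommutatorBoundedBy.congr_ae hbound hb.ae_eq_mk) x hr⟩
  exact ⟨⟨_, hosc⟩, hosc.bmoNorm_le⟩

/-- If `b ∈ L^q_loc(ℝ)` for some `1 < q < ∞` and the commutator `[b, C_Γ]` is bounded on
`L^p(ℝ)` with constant `C`, then `b ∈ BMO(ℝ)` with `‖b‖_BMO ≤ C₂ C`, where `C₂`
depends only on `p` and `L`. -/
theorem commutator_bounded_implies_bmo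
    (A : ℝ → ℝ) (L : ℝ) (hL : 0 < L)
    (hA : ∀ x₁ x₂ : ℝ, |A x₁ - A x₂| ≤ L * |x₁ - x₂|)
    (p : ℝ≥0∞) (hp1 : 1 < p) (hp2 : p ≠ ⊤) :
    ∃ C₂ : ℝ, 0 < C₂ ∧
      ∀ q : ℝ≥0∞, 1 < q → q ≠ ⊤ →
      ∀ b : ℝ → ℝ,
        (∀ K : Set ℝ, IsCompact K → MemLp b q (volume.restrict K)) →
        ∀ C : ℝ, 0 ≤ C →
          (∀ f : ℝ → ℂ, MemLp f p volume →
            ∃ g : ℝ → ℂ, IsCommutatorFn A b f g ∧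
              eLpNorm g p volume ≤ ENNReal.ofReal C * eLpNorm f p volume) →
          IsBMO b ∧ bmoNorm b ≤ C₂ * C :=
  commutator_bounded_implies_bmo_general A L hA p hp1
end

section
/- Let A : ℝ → ℝ be Lipschitz with constant L and let K(x,y) = 1/(y − x + i(A(y) − A(x))). Then for all x, y, y' ∈ ℝ with x ≠ y and |y − y'| ≤ |y − x|/2, one has |K(x,y) − K(x,y')| ≤ 2(L+1)|y − y'|/|y − x|² and |K(y,x) − K(y',x)| ≤ 2(L+1)|y − y'|/|y − x|². -/
open MeasureTheory Filter Set

/-!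
`K(x,y) = 1/(γ(y) - γ(x))` for the graph parametrisation `γ(t) = t + iA(t)`. The real part of a
chord of `γ` gives `|y - x| ≤ |γ(y) - γ(x)|`, and the Lipschitz bound gives
`|γ(y') - γ(y)| ≤ (L+1)|y - y'|`. Since `|y - y'| ≤ |y - x|/2`, also `|γ(y') - γ(x)| ≥ |y - x|/2`,
so `1/a - 1/b = (b - a)/(ab)` yields the estimate; `K(y,x) = -K(x,y)` gives the second one.
-/

theorem norm_inv_sub_inv_le {𝕜 : Type*} [NormedDivisionRing 𝕜] {z w : 𝕜} {r s M : ℝ}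
    (hr : 0 < r) (hs : 0 < s) (hz : r ≤ ‖z‖) (hw : s ≤ ‖w‖) (hM : ‖w - z‖ ≤ M) :
    ‖z⁻¹ - w⁻¹‖ ≤ M / (r * s) := by
  have hz0 : z ≠ 0 := norm_pos_iff.mp (hr.trans_le hz)
  have hw0 : w ≠ 0 := norm_pos_iff.mp (hs.trans_le hw)
  calc ‖z⁻¹ - w⁻¹‖ = ‖w - z‖ / (‖z‖ * ‖w‖) := by
        rw [inv_sub_inv' hz0 hw0, norm_mul, norm_mul, norm_inv, norm_inv]
        ring
    _ ≤ M / (r * s) := div_le_div₀ ((norm_nonneg _).trans hM) hM (mul_pos hr hs)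
        (mul_le_mul hz hw hs.le (norm_nonneg _))

noncomputable def graphCurve (A : ℝ → ℝ) (t : ℝ) : ℂ :=
  t + Complex.I * A t

namespace cauchyKernel

variable {A : ℝ → ℝ}

theorem eq_inv_graphCurve_sub (x y : ℝ) :
    cauchyKernel A x y = (graphCurve A y - graphCurve A x)⁻¹ := by
  rw [cauchyKernel, graphCurve, graphCurve]
  ring_nf

theorem swap (x y : ℝ) : cauchyKernel A y x = -cauchyKernel A x y := by
  rw [eq_inv_graphCurve_sub, eq_inv_graphCurve_sub, ← inv_neg, neg_sub]

theorem abs_sub_le_norm_graphCurve_sub (a b : ℝ) :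
    |b - a| ≤ ‖graphCurve A b - graphCurve A a‖ := by
  have hre : (graphCurve A b - graphCurve A a).re = b - a := by simp [graphCurve]
  simpa [hre] using Complex.abs_re_le_norm (graphCurve A b - graphCurve A a)

theorem norm_graphCurve_sub_le {L : ℝ} (hA : ∀ x₁ x₂ : ℝ, |A x₁ - A x₂| ≤ L * |x₁ - x₂|)
    (a b : ℝ) : ‖graphCurve A b - graphCurve A a‖ ≤ (L + 1) * |b - a| := by
  have hsplit :
      graphCurve A b - graphCurve A a = ((b - a : ℝ) : ℂ) + Complex.I * (A b - A a : ℝ) := by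
    push_cast [graphCurve]
    ring
  calc ‖graphCurve A b - graphCurve A a‖
      ≤ ‖((b - a : ℝ) : ℂ)‖ + ‖Complex.I * ((A b - A a : ℝ) : ℂ)‖ := hsplit ▸ norm_add_le _ _
    _ = |b - a| + |A b - A a| := by simp only [norm_mul, Complex.norm_I, Complex.norm_real,
        Real.norm_eq_abs, one_mul]
    _ ≤ (L + 1) * |b - a| := by linarith [hA b a]

theorem norm_sub_le {L : ℝ} (hA : ∀ x₁ x₂ : ℝ, |A x₁ - A x₂| ≤ L * |x₁ - x₂|) {x y y' : ℝ}
    (hxy : x ≠ y) (hclose : |y - y'| ≤ |y - x| / 2) :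
    ‖cauchyKernel A x y - cauchyKernel A x y'‖ ≤ 2 * (L + 1) * |y - y'| / |y - x| ^ 2 := by
  have hpos : 0 < |y - x| := abs_pos.mpr (sub_ne_zero.mpr hxy.symm)
  have hfar : |y - x| / 2 ≤ ‖graphCurve A y' - graphCurve A x‖ := by
    linarith [abs_sub_le y y' x, abs_sub_le_norm_graphCurve_sub (A := A) x y']
  have hchord : ‖(graphCurve A y' - graphCurve A x) - (graphCurve A y - graphCurve A x)‖
      ≤ (L + 1) * |y - y'| := by
    rw [sub_sub_sub_cancel_right, abs_sub_comm]
    exact norm_graphCurve_sub_le hA y y'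
  rw [eq_inv_graphCurve_sub, eq_inv_graphCurve_sub]
  calc _ ≤ (L + 1) * |y - y'| / (|y - x| * (|y - x| / 2)) :=
        norm_inv_sub_inv_le hpos (half_pos hpos) (abs_sub_le_norm_graphCurve_sub x y) hfar hchord
    _ = 2 * (L + 1) * |y - y'| / |y - x| ^ 2 := by field_simp

end cauchyKernel

theorem cauchyKernel_smoothness_general
    (A : ℝ → ℝ) (L : ℝ)
    (hA : ∀ x₁ x₂ : ℝ, |A x₁ - A x₂| ≤ L * |x₁ - x₂|) :
    ∀ x y y' : ℝ, x ≠ y → |y - y'| ≤ |y - x| / 2 →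
      ‖cauchyKernel A x y - cauchyKernel A x y'‖ ≤ 2 * (L + 1) * |y - y'| / |y - x| ^ 2 ∧
      ‖cauchyKernel A y x - cauchyKernel A y' x‖ ≤ 2 * (L + 1) * |y - y'| / |y - x| ^ 2 := by
  intro x y y' hxy hclose
  have hleft := cauchyKernel.norm_sub_le hA hxy hclose
  refine ⟨hleft, ?_⟩
  rwa [cauchyKernel.swap x y, cauchyKernel.swap x y', neg_sub_neg, norm_sub_rev]

/-- Smoothness estimates for the Cauchy kernel: if `|y - y'| ≤ |y - x|/2` then
`|K(x,y) - K(x,y')| ≤ 2(L+1)|y - y'|/|y - x|²` and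
`|K(y,x) - K(y',x)| ≤ 2(L+1)|y - y'|/|y - x|²`. -/
theorem cauchyKernel_smoothness
    (A : ℝ → ℝ) (L : ℝ) (hL : 0 < L)
    (hA : ∀ x₁ x₂ : ℝ, |A x₁ - A x₂| ≤ L * |x₁ - x₂|) :
    ∀ x y y' : ℝ, x ≠ y → |y - y'| ≤ |y - x| / 2 →
      ‖cauchyKernel A x y - cauchyKernel A x y'‖ ≤ 2 * (L + 1) * |y - y'| / |y - x| ^ 2 ∧
      ‖cauchyKernel A y x - cauchyKernel A y' x‖ ≤ 2 * (L + 1) * |y - y'| / |y - x| ^ 2 :=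
  cauchyKernel_smoothness_general A L hA
end

section
/- Let A : ℝ → ℝ be Lipschitz with constant L and let K(x,y) = 1/(y − x + i(A(y) − A(x))). Let f : ℝ → ℝ be integrable with supp f ⊆ I := (x₀ − r, x₀ + r), ∫_ℝ f = 0, and |f(z)| ≤ N for a.e. z. Then for every y ∈ ℝ with |y − x₀| ≥ 2r, the integral ∫_I K(y,z) f(z) dz converges absolutely and |∫_I K(y,z) f(z) dz| ≤ 4(L+1) N r² / |y − x₀|². -/
open MeasureTheory Filter Set

/-!
Since `f` has mean zero, the constant `K(y, x₀)` may be subtracted from the kernel. The inverse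
kernel `K(y, ·)⁻¹` is `(L + 1)`-Lipschitz with `‖K(y, z)⁻¹‖ ≥ |z - y|`, and for `z ∈ I` both `z`
and `x₀` lie at distance at least `|y - x₀| / 2` from `y`; hence
`‖K(y, z) - K(y, x₀)‖ ≤ 2(L + 1) r / |y - x₀|²` on `I`, and integrating this against `|f| ≤ N`
over an interval of length `2r` gives the bound.
-/

section CauchyKernel

variable {A : ℝ → ℝ} {L : ℝ}

theorem cauchyKernel_inv (A : ℝ → ℝ) (x y : ℝ) :
    (cauchyKernel A x y)⁻¹ = (y : ℂ) - x + Complex.I * ((A y : ℂ) - A x) :=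
  inv_inv _

theorem abs_sub_le_norm_cauchyKernel_inv (A : ℝ → ℝ) (x y : ℝ) :
    |y - x| ≤ ‖(cauchyKernel A x y)⁻¹‖ := by
  simpa [cauchyKernel_inv] using Complex.abs_re_le_norm (cauchyKernel A x y)⁻¹

theorem continuousOn_cauchyKernel (hA : Continuous A) (x : ℝ) :
    ContinuousOn (cauchyKernel A x) {y | y ≠ x} := by
  refine ContinuousOn.inv₀ (by fun_prop) fun y hy h0 => hy ?_
  have := abs_sub_le_norm_cauchyKernel_inv A x y
  rw [cauchyKernel, inv_inv, h0, norm_zero] at this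
  exact sub_eq_zero.mp (abs_nonpos_iff.mp this)

theorem integrableOn_cauchyKernel_mul (hA : Continuous A) {x C : ℝ} {s : Set ℝ}
    (hs : MeasurableSet s) (hx : x ∉ s) (hK : ∀ y ∈ s, ‖cauchyKernel A x y‖ ≤ C) {g : ℝ → ℂ}
    (hg : IntegrableOn g s) : IntegrableOn (fun y => cauchyKernel A x y * g y) s :=
  hg.bdd_mul ((continuousOn_cauchyKernel hA x).mono (fun _ hy h => hx (h ▸ hy))
    |>.aestronglyMeasurable hs) ((ae_restrict_iff' hs).mpr (ae_of_all _ hK))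

theorem nonneg_of_forall_abs_sub_le_mul (hA : ∀ x₁ x₂ : ℝ, |A x₁ - A x₂| ≤ L * |x₁ - x₂|) :
    0 ≤ L := by
  simpa using (abs_nonneg _).trans (hA 1 0)

theorem norm_cauchyKernel_inv_sub_le (hA : ∀ x₁ x₂ : ℝ, |A x₁ - A x₂| ≤ L * |x₁ - x₂|)
    (x y z : ℝ) :
    ‖(cauchyKernel A x y)⁻¹ - (cauchyKernel A x z)⁻¹‖ ≤ (L + 1) * |y - z| := by
  have hdiff : (cauchyKernel A x y)⁻¹ - (cauchyKernel A x z)⁻¹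
      = ((y - z : ℝ) : ℂ) + Complex.I * ((A y - A z : ℝ) : ℂ) := by
    simp only [cauchyKernel_inv]; push_cast; ring
  calc ‖(cauchyKernel A x y)⁻¹ - (cauchyKernel A x z)⁻¹‖ ≤ |y - z| + |A y - A z| := by
        rw [hdiff]
        refine (norm_add_le _ _).trans_eq ?_
        rw [norm_mul, Complex.norm_I, one_mul, Complex.norm_real, Complex.norm_real,
          Real.norm_eq_abs, Real.norm_eq_abs]
    _ ≤ (L + 1) * |y - z| := by linarith [hA y z]

theorem norm_cauchyKernel_sub_le (hA : ∀ x₁ x₂ : ℝ, |A x₁ - A x₂| ≤ L * |x₁ - x₂|)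
    {x y z : ℝ} (hy : y ≠ x) (hz : z ≠ x) :
    ‖cauchyKernel A x y - cauchyKernel A x z‖ ≤ (L + 1) * |y - z| / (|y - x| * |z - x|) := by
  set a := (cauchyKernel A x y)⁻¹
  set b := (cauchyKernel A x z)⁻¹
  have ha : |y - x| ≤ ‖a‖ := abs_sub_le_norm_cauchyKernel_inv A x y
  have hb : |z - x| ≤ ‖b‖ := abs_sub_le_norm_cauchyKernel_inv A x z
  have hyx : 0 < |y - x| := abs_pos.mpr (sub_ne_zero.mpr hy)
  have hzx : 0 < |z - x| := abs_pos.mpr (sub_ne_zero.mpr hz)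
  have hab : cauchyKernel A x y - cauchyKernel A x z = -((a - b) / (a * b)) := by
    rw [← inv_inv (cauchyKernel A x y), ← inv_inv (cauchyKernel A x z),
      inv_sub_inv (norm_pos_iff.mp (hyx.trans_le ha)) (norm_pos_iff.mp (hzx.trans_le hb))]
    ring
  rw [hab, norm_neg, norm_div, norm_mul]
  have hL := nonneg_of_forall_abs_sub_le_mul hA
  exact div_le_div₀ (by positivity)
    (norm_cauchyKernel_inv_sub_le hA x y z) (by positivity) (mul_le_mul ha hb hzx.le (by simp))

theorem norm_cauchyKernel_sub_le_of_abs_sub_lt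
    (hA : ∀ x₁ x₂ : ℝ, |A x₁ - A x₂| ≤ L * |x₁ - x₂|) {x₀ r y z : ℝ} (hz : |z - x₀| < r)
    (hy : 2 * r ≤ |y - x₀|) :
    ‖cauchyKernel A y z - cauchyKernel A y x₀‖ ≤ 2 * (L + 1) * r / |y - x₀| ^ 2 := by
  have hL := nonneg_of_forall_abs_sub_le_mul hA
  have hzy : |y - x₀| / 2 ≤ |z - y| := by
    linarith [abs_sub_le y z x₀, abs_sub_comm y z]
  have hr : 0 < r := (abs_nonneg _).trans_lt hz
  have hx₀y : |x₀ - y| = |y - x₀| := abs_sub_comm _ _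
  have hc : 0 < |y - x₀| := by linarith
  calc ‖cauchyKernel A y z - cauchyKernel A y x₀‖
      ≤ (L + 1) * |z - x₀| / (|z - y| * |x₀ - y|) :=
        norm_cauchyKernel_sub_le hA (fun h => by simp [h] at hzy; linarith)
          (fun h => by simp [h] at hc)
    _ ≤ (L + 1) * r / (|y - x₀| / 2 * |y - x₀|) := by
        rw [hx₀y]
        gcongr
    _ = 2 * (L + 1) * r / |y - x₀| ^ 2 := by field_simp

end CauchyKernel

theorem setIntegral_mul_eq_setIntegral_sub_mul {α : Type*} [MeasurableSpace α] {μ : Measure α}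
    {s : Set α} {k g : α → ℂ} (hkg : IntegrableOn (fun x => k x * g x) s μ)
    (hg : IntegrableOn g s μ) (hg0 : ∫ x in s, g x ∂μ = 0) (c : ℂ) :
    ∫ x in s, k x * g x ∂μ = ∫ x in s, (k x - c) * g x ∂μ := by
  simp_rw [sub_mul]
  rw [integral_sub hkg (hg.const_mul c), integral_const_mul, hg0, mul_zero, sub_zero]

theorem cauchyKernel_cancellation_general
    (A : ℝ → ℝ) (L : ℝ)
    (hA : ∀ x₁ x₂ : ℝ, |A x₁ - A x₂| ≤ L * |x₁ - x₂|)
    (f : ℝ → ℝ) (x₀ r : ℝ) (hr : 0 < r)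
    (hsupp : Function.support f ⊆ Set.Ioo (x₀ - r) (x₀ + r))
    (hint : Integrable f volume)
    (hzero : (∫ z : ℝ, f z) = 0)
    (N : ℝ) (hN : ∀ᵐ z : ℝ, |f z| ≤ N)
    (y : ℝ) (hy : 2 * r ≤ |y - x₀|) :
    IntegrableOn (fun z => cauchyKernel A y z * (f z : ℂ)) (Set.Ioo (x₀ - r) (x₀ + r))
        volume ∧
    ‖∫ z in Set.Ioo (x₀ - r) (x₀ + r), cauchyKernel A y z * (f z : ℂ)‖ ≤
      4 * (L + 1) * N * r ^ 2 / |y - x₀| ^ 2 := by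
  set I := Ioo (x₀ - r) (x₀ + r)
  have hL := nonneg_of_forall_abs_sub_le_mul hA
  have hI : ∀ z ∈ I, |z - x₀| < r := fun z hz =>
    abs_sub_lt_iff.mpr ⟨by linarith [hz.2], by linarith [hz.1]⟩
  have hK : ∀ z ∈ I, ‖cauchyKernel A y z - cauchyKernel A y x₀‖ ≤
      2 * (L + 1) * r / |y - x₀| ^ 2 := fun z hz =>
    norm_cauchyKernel_sub_le_of_abs_sub_lt hA (hI z hz) hy
  have hfI : IntegrableOn (fun z => (f z : ℂ)) I := hint.ofReal.integrableOn
  have hAc : Continuous A :=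
    (LipschitzWith.of_dist_le' (by simpa only [Real.dist_eq] using hA)).continuous
  have hyI : y ∉ I := fun hy' => by linarith [hI y hy']
  have hKf : IntegrableOn (fun z => cauchyKernel A y z * (f z : ℂ)) I :=
    integrableOn_cauchyKernel_mul hAc measurableSet_Ioo hyI (fun z hz =>
      (norm_le_norm_sub_add _ (cauchyKernel A y x₀)).trans (add_le_add (hK z hz) le_rfl)) hfI
  refine ⟨hKf, ?_⟩
  have hf0 : ∫ z in I, (f z : ℂ) = 0 := by
    rw [integral_complex_ofReal, setIntegral_eq_integral_of_forall_compl_eq_zero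
      fun z hz => Function.notMem_support.mp fun h => hz (hsupp h), hzero, Complex.ofReal_zero]
  rw [setIntegral_mul_eq_setIntegral_sub_mul hKf hfI hf0 (cauchyKernel A y x₀)]
  calc _ ≤ 2 * (L + 1) * r / |y - x₀| ^ 2 * N * volume.real I := by
        refine norm_setIntegral_le_of_norm_le_const_ae' measure_Ioo_lt_top ?_
        filter_upwards [hN] with z hfz hz
        rw [norm_mul, Complex.norm_real, Real.norm_eq_abs]
        exact mul_le_mul (hK z hz) hfz (abs_nonneg _) (by positivity)
    _ = 4 * (L + 1) * N * r ^ 2 / |y - x₀| ^ 2 := by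
        rw [Real.volume_real_Ioo_of_le (by linarith)]
        ring

/-- Cancellation estimate: if `f` is integrable, supported in `I = (x₀ - r, x₀ + r)`, has
mean zero and `|f| ≤ N` a.e., then for `|y - x₀| ≥ 2r` the integral `∫_I K(y,z) f(z) dz`
converges absolutely and is bounded by `4(L+1) N r² / |y - x₀|²`. -/
theorem cauchyKernel_cancellation
    (A : ℝ → ℝ) (L : ℝ) (hL : 0 < L)
    (hA : ∀ x₁ x₂ : ℝ, |A x₁ - A x₂| ≤ L * |x₁ - x₂|)
    (f : ℝ → ℝ) (x₀ r : ℝ) (hr : 0 < r)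
    (hsupp : Function.support f ⊆ Set.Ioo (x₀ - r) (x₀ + r))
    (hint : Integrable f volume)
    (hzero : (∫ z : ℝ, f z) = 0)
    (N : ℝ) (hN : ∀ᵐ z : ℝ, |f z| ≤ N)
    (y : ℝ) (hy : 2 * r ≤ |y - x₀|) :
    IntegrableOn (fun z => cauchyKernel A y z * (f z : ℂ)) (Set.Ioo (x₀ - r) (x₀ + r))
        volume ∧
    ‖∫ z in Set.Ioo (x₀ - r) (x₀ + r), cauchyKernel A y z * (f z : ℂ)‖ ≤
      4 * (L + 1) * N * r ^ 2 / |y - x₀| ^ 2 :=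
  cauchyKernel_cancellation_general A L hA f x₀ r hr hsupp hint hzero N hN y hy
end

section
/- Let A : ℝ → ℝ be Lipschitz with constant L, let p ∈ (1,∞) with conjugate exponent p' (1/p + 1/p' = 1), and let b be a smooth compactly supported function with supp b ⊆ (−R, R) for some R > 0. Then there is a constant C (depending only on p) such that for every t > 2 and every f ∈ L^p(ℝ), (∫_{|x|>tR} |[b,C_Γ]f(x)|^p dx)^{1/p} ≤ C ‖b‖_{L^∞(ℝ)} ‖f‖_{L^p(ℝ)} t^{−1/p'}. -/
open MeasureTheory Filter Set
open scoped ENNReal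

lemma cauchyKernel_norm_le (A : ℝ → ℝ) (x y : ℝ) (h : 0 < |y - x|) :
    ‖cauchyKernel A x y‖ ≤ |y - x|⁻¹ := by
  rw [cauchyKernel, norm_inv]
  have hre : ((y : ℂ) - (x : ℂ) + Complex.I * ((A y : ℂ) - (A x : ℂ))).re = y - x := by
    simp
  have h1 : |y - x| ≤ ‖(y : ℂ) - (x : ℂ) + Complex.I * ((A y : ℂ) - (A x : ℂ))‖ := by
    rw [← hre]; exact Complex.abs_re_le_norm _
  exact inv_anti₀ h h1

lemma comm_point {A b : ℝ → ℝ} {f g : ℝ → ℂ} {R : ℝ} (hR : 0 < R)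
    (hsupp : Function.support b ⊆ Set.Ioo (-R) R) {x : ℝ} (hx : 2 * R < |x|)
    {u w : ℂ} (hw : cauchyPV A (fun y => (b y : ℂ) * f y) x w)
    (hgx : g x = (b x : ℂ) * u - w) :
    g x = - ∫ y, cauchyKernel A x y * ((b y : ℂ) * f y) := by
  have hbR : ∀ y : ℝ, R ≤ |y| → b y = 0 := by
    intro y hy
    by_contra hb0
    have := hsupp (Function.mem_support.mpr hb0)
    have : |y| < R := abs_lt.mpr ⟨this.1, this.2⟩
    linarith
  have hbx : b x = 0 := hbR x (by linarith)
  have hIR : (0:ℝ) < |x| - R := by linarith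
  have hev : ∀ᶠ δ in nhdsWithin (0:ℝ) (Set.Ioi 0),
      (∫ y in {y : ℝ | δ < |y - x|}, cauchyKernel A x y * ((b y : ℂ) * f y))
        = ∫ y, cauchyKernel A x y * ((b y : ℂ) * f y) := by
    filter_upwards [mem_nhdsWithin_of_mem_nhds (Iio_mem_nhds hIR)] with δ hδ
    apply setIntegral_eq_integral_of_forall_compl_eq_zero
    intro y hy
    simp only [mem_setOf_eq, not_lt] at hy
    have h1 : |x| - |y| ≤ |y - x| := by
      have := abs_sub_abs_le_abs_sub x y
      rwa [abs_sub_comm] at this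
    have : R ≤ |y| := by
      have : δ < |x| - R := hδ
      linarith
    rw [hbR y this]
    simp
  have htend : Filter.Tendsto
      (fun δ : ℝ => ∫ y in {y : ℝ | δ < |y - x|}, cauchyKernel A x y * ((b y : ℂ) * f y))
      (nhdsWithin 0 (Set.Ioi 0))
      (nhds (∫ y, cauchyKernel A x y * ((b y : ℂ) * f y))) :=
    Filter.Tendsto.congr' (hev.mono fun δ h => h.symm) tendsto_const_nhds
  have hwe : w = ∫ y, cauchyKernel A x y * ((b y : ℂ) * f y) :=
    tendsto_nhds_unique hw htend
  rw [hgx, hbx, hwe]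
  simp

lemma holder_Ioo {p p' : ℝ} (hp : 1 < p) (hpp' : 1 / p + 1 / p' = 1) {R : ℝ} (hR : 0 < R)
    {f : ℝ → ℂ} (hf : MemLp f (ENNReal.ofReal p) volume) :
    (∫⁻ y in Set.Ioo (-R) R, (‖f y‖₊ : ℝ≥0∞)) ≤
      eLpNorm f (ENNReal.ofReal p) volume * ENNReal.ofReal ((2*R) ^ (1/p')) := by
  have hp0 : (0:ℝ) < p := by linarith
  have h1q : (1:ℝ≥0∞) ≤ ENNReal.ofReal p := by
    rw [← ENNReal.ofReal_one]; exact ENNReal.ofReal_le_ofReal hp.le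
  have h1 : (∫⁻ y in Set.Ioo (-R) R, (‖f y‖₊ : ℝ≥0∞)) =
      eLpNorm f 1 (volume.restrict (Set.Ioo (-R) R)) := by
    exact (eLpNorm_one_eq_lintegral_enorm (f := f)).symm
  rw [h1]
  calc eLpNorm f 1 (volume.restrict (Set.Ioo (-R) R))
      ≤ eLpNorm f (ENNReal.ofReal p) (volume.restrict (Set.Ioo (-R) R)) *
        (volume.restrict (Set.Ioo (-R) R) Set.univ) ^
          (1 / (1:ℝ≥0∞).toReal - 1 / (ENNReal.ofReal p).toReal) :=
        eLpNorm_le_eLpNorm_mul_rpow_measure_univ h1q (hf.1.restrict)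
    _ ≤ eLpNorm f (ENNReal.ofReal p) volume * ENNReal.ofReal ((2*R) ^ (1/p')) := by
        gcongr
        · exact Measure.restrict_le_self
        · have hm : (volume.restrict (Set.Ioo (-R) R)) Set.univ = ENNReal.ofReal (2*R) := by
            rw [Measure.restrict_apply_univ, Real.volume_Ioo]
            congr 1; ring
          have hexp : 1 / (1:ℝ≥0∞).toReal - 1 / (ENNReal.ofReal p).toReal = 1/p' := by
            rw [ENNReal.toReal_one, ENNReal.toReal_ofReal hp0.le]
            linarith
          rw [hm, hexp, ← ENNReal.ofReal_rpow_of_pos (by linarith)]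

lemma lintegral_decay {p : ℝ} (hp : 1 < p) {a : ℝ} (ha : 0 < a) :
    (∫⁻ x in {x : ℝ | a < |x|}, ENNReal.ofReal ((2/|x|) ^ p)) =
      ENNReal.ofReal (2 * (2 ^ p * (a ^ (1-p) / (p-1)))) := by
  have hSeq : {x : ℝ | a < |x|} = Set.Iio (-a) ∪ Set.Ioi a := by
    ext x
    simp only [Set.mem_setOf_eq, Set.mem_union, Set.mem_Iio, Set.mem_Ioi, lt_abs]
    constructor
    · rintro (h | h); exacts [Or.inr h, Or.inl (by linarith)]
    · rintro (h | h); exacts [Or.inr (by linarith), Or.inl h]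
  have hmeas : Measurable fun x : ℝ => ENNReal.ofReal ((2/|x|) ^ p) :=
    ((measurable_const.div measurable_abs).pow measurable_const).ennreal_ofReal
  have hdisj : Disjoint (Set.Iio (-a)) (Set.Ioi a) := by
    rw [Set.disjoint_left]
    intro x hx1 hx2
    simp only [Set.mem_Iio, Set.mem_Ioi] at hx1 hx2
    linarith
  have hpos : (∫⁻ x in Set.Ioi a, ENNReal.ofReal ((2/|x|) ^ p)) =
      ENNReal.ofReal (2 ^ p * (a ^ (1-p) / (p-1))) := by
    have hcong : (∫⁻ x in Set.Ioi a, ENNReal.ofReal ((2/|x|) ^ p)) =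
        ∫⁻ x in Set.Ioi a, ENNReal.ofReal (2 ^ p * x ^ (-p)) := by
      apply setLIntegral_congr_fun measurableSet_Ioi
      intro x hx
      show ENNReal.ofReal ((2/|x|) ^ p) = ENNReal.ofReal (2 ^ p * x ^ (-p))
      have hx0 : (0:ℝ) < x := lt_trans ha hx
      rw [abs_of_pos hx0, Real.div_rpow (by norm_num) hx0.le, Real.rpow_neg hx0.le,
        div_eq_mul_inv]
    rw [hcong]
    have hint : IntegrableOn (fun x : ℝ => 2 ^ p * x ^ (-p)) (Set.Ioi a) :=
      (integrableOn_Ioi_rpow_of_lt (by linarith) ha).const_mul _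
    rw [← ofReal_integral_eq_lintegral_ofReal hint ?_]
    · congr 1
      rw [MeasureTheory.integral_const_mul, integral_Ioi_rpow_of_lt (by linarith) ha]
      have : -p + 1 = 1 - p := by ring
      rw [this]
      congr 1
      have h1 : (1:ℝ) - p ≠ 0 := by linarith
      have h2 : p - 1 ≠ 0 := by linarith
      field_simp
      ring
    · filter_upwards [ae_restrict_mem measurableSet_Ioi] with x hx
      have hx0 : (0:ℝ) < x := lt_trans ha hx
      positivity
  have hneg : (∫⁻ x in Set.Iio (-a), ENNReal.ofReal ((2/|x|) ^ p)) =
      ∫⁻ x in Set.Ioi a, ENNReal.ofReal ((2/|x|) ^ p) := by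
    have hmp := Measure.measurePreserving_neg (volume : Measure ℝ)
    conv_lhs => rw [← hmp.map_eq]
    rw [setLIntegral_map measurableSet_Iio hmeas measurable_neg]
    have : (Neg.neg : ℝ → ℝ) ⁻¹' Set.Iio (-a) = Set.Ioi a := by
      ext z; simp [neg_lt_neg_iff]
    rw [this]
    simp only [abs_neg]
  have hnn : (0:ℝ) ≤ 2 ^ p * (a ^ (1-p) / (p-1)) :=
    mul_nonneg (Real.rpow_nonneg (by norm_num) _)
      (div_nonneg (Real.rpow_nonneg ha.le _) (by linarith))
  rw [hSeq, lintegral_union measurableSet_Ioi hdisj, hneg, hpos,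
    ← ENNReal.ofReal_add hnn hnn]
  congr 1; ring


/-- Decay of the commutator at infinity: for smooth compactly supported `b` with
`supp b ⊆ (-R, R)`, `t > 2` and `f ∈ L^p(ℝ)`,
`(∫_{|x| > tR} |[b,C_Γ]f|^p)^{1/p} ≤ C ‖b‖_∞ ‖f‖_{L^p} t^{-1/p'}`, with `C` depending only
on `p`. -/
theorem commutator_decay_at_infinity
    (A : ℝ → ℝ) (L : ℝ) (hL : 0 < L)
    (hA : ∀ x₁ x₂ : ℝ, |A x₁ - A x₂| ≤ L * |x₁ - x₂|)
    (p p' : ℝ) (hp : 1 < p) (hpp' : 1 / p + 1 / p' = 1) :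
    ∃ C : ℝ, 0 < C ∧
      ∀ b : ℝ → ℝ, ContDiff ℝ (⊤ : ℕ∞) b → HasCompactSupport b →
      ∀ R : ℝ, 0 < R → Function.support b ⊆ Set.Ioo (-R) R →
      ∀ t : ℝ, 2 < t →
      ∀ f : ℝ → ℂ, MemLp f (ENNReal.ofReal p) volume →
      ∀ g : ℝ → ℂ, IsCommutatorFn A b f g →
        (∫⁻ x in {x : ℝ | t * R < |x|}, (‖g x‖₊ : ℝ≥0∞) ^ p) ^ (1 / p) ≤
          ENNReal.ofReal
            (C * (eLpNorm b ⊤ volume).toReal *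
              (eLpNorm f (ENNReal.ofReal p) volume).toReal * t ^ (-1 / p')) := by
  have hp0 : (0:ℝ) < p := by linarith
  have hp'inv : 1 / p' = 1 - 1/p := by linarith
  have hp'0 : (0:ℝ) < 1/p' := by
    rw [hp'inv]
    have : 1/p < 1 := by
      rw [div_lt_one hp0]; exact hp
    linarith
  have hCpos : (0:ℝ) < 2 ^ (1/p') * (2 ^ (p+1) / (p-1)) ^ (1/p) :=
    mul_pos (Real.rpow_pos_of_pos two_pos _)
      (Real.rpow_pos_of_pos (div_pos (Real.rpow_pos_of_pos two_pos _) (by linarith)) _)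
  refine ⟨2 ^ (1/p') * (2 ^ (p+1) / (p-1)) ^ (1/p), hCpos, ?_⟩
  intro b hb hbc R hR hsupp t ht f hf g hg
  set q := ENNReal.ofReal p with hq
  set Np := eLpNorm f q volume with hNp
  set B := eLpNorm b ⊤ volume with hB
  have ha : (0:ℝ) < t * R := by positivity
  have ha2R : 2 * R < t * R := by nlinarith
  set S := {x : ℝ | t * R < |x|} with hSdef
  have hS : MeasurableSet S := measurableSet_lt measurable_const measurable_abs
  -- b is bounded
  have hBne : B ≠ ⊤ := by
    obtain ⟨Cb, hCb⟩ := hbc.exists_bound_of_continuous hb.continuous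
    exact ((memLp_top_of_bound hb.continuous.aestronglyMeasurable Cb
      (Filter.Eventually.of_forall hCb)).2).ne
  have hNpne : Np ≠ ⊤ := hf.2.ne
  set F := ∫⁻ y in Set.Ioo (-R) R, (‖f y‖₊ : ℝ≥0∞) with hF
  have hFle : F ≤ Np * ENNReal.ofReal ((2*R) ^ (1/p')) := holder_Ioo hp hpp' hR hf
  -- pointwise bound
  have hkey : ∀ᵐ x ∂(volume.restrict S),
      (‖g x‖₊ : ℝ≥0∞) ≤ ENNReal.ofReal (2/|x|) * (B * F) := by
    filter_upwards [ae_restrict_of_ae hg, ae_restrict_mem hS] with x hx hxS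
    obtain ⟨u, w, hu, hw, hgx⟩ := hx
    have hax : t * R < |x| := hxS
    have h2R : 2 * R < |x| := lt_trans ha2R hax
    have hx0 : (0:ℝ) < |x| := by linarith
    have hgeq := comm_point hR hsupp h2R hw hgx
    rw [hgeq, nnnorm_neg]
    calc (‖∫ y, cauchyKernel A x y * ((b y : ℂ) * f y)‖₊ : ℝ≥0∞)
        ≤ ∫⁻ y, ‖cauchyKernel A x y * ((b y : ℂ) * f y)‖₊ :=
          enorm_integral_le_lintegral_enorm _
      _ ≤ ∫⁻ y, (Set.Ioo (-R) R).indicator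
            (fun y => ENNReal.ofReal (2/|x|) * ((‖b y‖₊ : ℝ≥0∞) * ‖f y‖₊)) y := by
          apply lintegral_mono
          intro y
          by_cases hy : y ∈ Set.Ioo (-R) R
          · rw [Set.indicator_of_mem hy]
            have hyx : |x| / 2 ≤ |y - x| := by
              have h1 : |x| - |y| ≤ |y - x| := by
                have := abs_sub_abs_le_abs_sub x y
                rwa [abs_sub_comm] at this
              have h2 : |y| < R := abs_lt.mpr ⟨hy.1, hy.2⟩
              linarith
            have hyx0 : (0:ℝ) < |y - x| := by linarith
            have hK : ‖cauchyKernel A x y‖ ≤ 2/|x| := by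
              calc ‖cauchyKernel A x y‖ ≤ |y - x|⁻¹ := cauchyKernel_norm_le A x y hyx0
                _ ≤ (|x|/2)⁻¹ := by
                    apply inv_anti₀ (by positivity) hyx
                _ = 2/|x| := by rw [inv_div]
            calc (‖cauchyKernel A x y * ((b y : ℂ) * f y)‖₊ : ℝ≥0∞)
                = (‖cauchyKernel A x y‖₊ : ℝ≥0∞) * ((‖b y‖₊ : ℝ≥0∞) * ‖f y‖₊) := by
                  rw [nnnorm_mul, nnnorm_mul, Complex.nnnorm_real]
                  push_cast
                  ring
              _ ≤ ENNReal.ofReal (2/|x|) * ((‖b y‖₊ : ℝ≥0∞) * ‖f y‖₊) := by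
                  gcongr
                  rw [← enorm_eq_nnnorm, ← ofReal_norm_eq_enorm]
                  exact ENNReal.ofReal_le_ofReal hK
          · rw [Set.indicator_of_notMem hy]
            have hby : b y = 0 := by
              by_contra hb0
              exact hy (hsupp (Function.mem_support.mpr hb0))
            simp [hby]
      _ = ENNReal.ofReal (2/|x|) * ∫⁻ y in Set.Ioo (-R) R, (‖b y‖₊ : ℝ≥0∞) * ‖f y‖₊ := by
          rw [lintegral_indicator measurableSet_Ioo,
            lintegral_const_mul' _ _ ENNReal.ofReal_ne_top]
      _ ≤ ENNReal.ofReal (2/|x|) * (B * F) := by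
          gcongr
          calc (∫⁻ y in Set.Ioo (-R) R, (‖b y‖₊ : ℝ≥0∞) * ‖f y‖₊)
              ≤ ∫⁻ y in Set.Ioo (-R) R, B * ‖f y‖₊ := by
                apply lintegral_mono_ae
                filter_upwards [ae_restrict_of_ae
                  (enorm_ae_le_eLpNormEssSup b volume)] with y hy
                have : B = eLpNormEssSup b volume := by
                  rw [hB, eLpNorm_exponent_top]
                rw [this]
                exact mul_le_mul_left hy _
            _ = B * F := lintegral_const_mul' _ _ hBne
  -- main estimate
  have hmain : (∫⁻ x in S, (‖g x‖₊ : ℝ≥0∞) ^ p) ≤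
      (∫⁻ x in S, ENNReal.ofReal ((2/|x|) ^ p)) * (B * F) ^ p := by
    rw [← lintegral_mul_const _ (f := fun x : ℝ => ENNReal.ofReal ((2/|x|) ^ p)) (((measurable_const.div measurable_abs).pow
      measurable_const).ennreal_ofReal)]
    apply lintegral_mono_ae
    filter_upwards [hkey] with x hx
    calc (‖g x‖₊ : ℝ≥0∞) ^ p ≤ (ENNReal.ofReal (2/|x|) * (B * F)) ^ p :=
          ENNReal.rpow_le_rpow hx hp0.le
      _ = ENNReal.ofReal ((2/|x|) ^ p) * (B * F) ^ p := by
          rw [ENNReal.mul_rpow_of_nonneg _ _ hp0.le,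
            ENNReal.ofReal_rpow_of_nonneg (by positivity) hp0.le]
  have hJ : (∫⁻ x in S, ENNReal.ofReal ((2/|x|) ^ p)) =
      ENNReal.ofReal (2 * (2 ^ p * ((t*R) ^ (1-p) / (p-1)))) := by
    rw [hSdef]; exact lintegral_decay hp ha
  -- final computation
  have hnn1 : (0:ℝ) ≤ 2 * (2 ^ p * ((t*R) ^ (1-p) / (p-1))) := by
    have := Real.rpow_nonneg ha.le (1-p)
    have h2p := Real.rpow_nonneg (by norm_num : (0:ℝ) ≤ 2) p
    have : (0:ℝ) ≤ (t*R) ^ (1-p) / (p-1) := div_nonneg ‹_› (by linarith)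
    positivity
  calc (∫⁻ x in S, (‖g x‖₊ : ℝ≥0∞) ^ p) ^ (1/p)
      ≤ ((∫⁻ x in S, ENNReal.ofReal ((2/|x|) ^ p)) * (B * F) ^ p) ^ (1/p) :=
        ENNReal.rpow_le_rpow hmain (by positivity)
    _ = (∫⁻ x in S, ENNReal.ofReal ((2/|x|) ^ p)) ^ (1/p) * (B * F) := by
        rw [ENNReal.mul_rpow_of_nonneg _ _ (by positivity : (0:ℝ) ≤ 1/p),
          ← ENNReal.rpow_mul, mul_one_div, div_self hp0.ne', ENNReal.rpow_one]
    _ ≤ ENNReal.ofReal ((2 * (2 ^ p * ((t*R) ^ (1-p) / (p-1)))) ^ (1/p)) *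
          (B * (Np * ENNReal.ofReal ((2*R) ^ (1/p')))) := by
        rw [hJ, ENNReal.ofReal_rpow_of_nonneg hnn1 (by positivity)]
        gcongr
    _ ≤ ENNReal.ofReal
          (2 ^ (1/p') * (2 ^ (p+1) / (p-1)) ^ (1/p) * B.toReal * Np.toReal *
            t ^ (-1/p')) := by
        rw [← ENNReal.ofReal_toReal hBne, ← ENNReal.ofReal_toReal hNpne,
          ← ENNReal.ofReal_mul (by positivity), ← ENNReal.ofReal_mul ENNReal.toReal_nonneg,
          ← ENNReal.ofReal_mul (by positivity)]
        apply ENNReal.ofReal_le_ofReal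
        -- real arithmetic
        have hc2 : 2 * (2 ^ p * ((t*R) ^ (1-p) / (p-1))) =
            (2 ^ (p+1) / (p-1)) * (t*R) ^ (1-p) := by
          rw [Real.rpow_add (by norm_num : (0:ℝ) < 2) p 1, Real.rpow_one]
          ring
        have hKpnn : (0:ℝ) ≤ 2 ^ (p+1) / (p-1) :=
          div_nonneg (Real.rpow_nonneg (by norm_num) _) (by linarith)
        have hRcan : R ^ (-1/p') * R ^ (1/p') = 1 := by
          rw [← Real.rpow_add hR, neg_div, neg_add_cancel, Real.rpow_zero]
        have he : (1 - p) * (1/p) = -1/p' := by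
          rw [neg_div, hp'inv]
          field_simp
          ring
        have ht0 : (0:ℝ) < t := by linarith
        have hsplit : (2 * (2 ^ p * ((t*R) ^ (1-p) / (p-1)))) ^ (1/p) =
            (2 ^ (p+1) / (p-1)) ^ (1/p) * (t ^ (-1/p') * R ^ (-1/p')) := by
          rw [hc2, Real.mul_rpow hKpnn (Real.rpow_nonneg ha.le _),
            ← Real.rpow_mul ha.le, he, Real.mul_rpow ht0.le hR.le]
        have h2Rsplit : (2*R) ^ (1/p') = 2 ^ (1/p') * R ^ (1/p') :=
          Real.mul_rpow (by norm_num) hR.le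
        apply le_of_eq
        rw [hsplit, h2Rsplit]
        simp only [ENNReal.toReal_ofReal ENNReal.toReal_nonneg]
        linear_combination ((2 ^ (p+1) / (p-1)) ^ (1/p) * t ^ (-1/p') * B.toReal *
          Np.toReal * 2 ^ (1/p')) * hRcan
end
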